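/- For every i ∈ ℤ the following identities hold on the monotone Fock space: a†_{i+1} a_{i+1} = a_i a_i† − a_{i+1} a†_{i+1}, and, writing s_j := a_j + a_j†, one has s_i s_{i+1}² = a_i†. -/

import Mathlib

open scoped InnerProductSpace ComplexOrder
open ContinuousLinearMap Filter

noncomputable section

/-- The monotone Fock space `F_m = ℓ²(Finset ℤ)`, the Hilbert space of square-summable
complex families indexed by the finite subsets of `ℤ`. -/
abbrev Fm : Type := lp (fun _ : Finset ℤ => ℂ) 2

/-- The canonical orthonormal basis vector `e_A`, for `A` a finite subset of `ℤ`;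
`e ∅` is the vacuum vector `Ω`. -/
noncomputable def e (A : Finset ℤ) : Fm := lp.single 2 A 1

/-- `adag` is the family of monotone creation operators: `adag i` sends `e A` to
`e (A ∪ {i})` if `A = ∅` or `i < min A` (equivalently, `i < j` for all `j ∈ A`),
and to `0` otherwise. -/
def CreatesOn (adag : ℤ → (Fm →L[ℂ] Fm)) : Prop :=
  ∀ (i : ℤ) (A : Finset ℤ),
    adag i (e A) = if ∀ j ∈ A, i < j then e (insert i A) else 0

/-- `a` is the family of monotone annihilation operators: `a i` sends `e A` to
`e (A \ {i})` if `A ≠ ∅` and `i = min A` (equivalently, `i ∈ A` and `i ≤ j` for all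
`j ∈ A`), and to `0` otherwise. -/
def AnnihilatesOn (a : ℤ → (Fm →L[ℂ] Fm)) : Prop :=
  ∀ (i : ℤ) (A : Finset ℤ),
    a i (e A) = if i ∈ A ∧ ∀ j ∈ A, i ≤ j then e (A.erase i) else 0

/-!
On basis vectors, `a†_k a_k` and `a_k a†_k` are the orthogonal projections onto the span of the
`e A` with `min A = k`, resp. with `A = ∅` or `min A > k`; the first identity just splits the
condition `min A > i` into `min A = i + 1` and `min A > i + 1`. Monotonicity gives
`a_k² = 0 = (a†_k)²` and `a†_k a_k a†_k = a†_k`, so `s_{i+1}² = a_{i+1} a†_{i+1} + a†_{i+1} a_{i+1}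
= a_i a†_i`, and then `s_i a_i a†_i = a†_i a_i a†_i = a†_i`.
-/

lemma Fm.ext_e {T S : Fm →L[ℂ] Fm} (h : ∀ A, T (e A) = S (e A)) : T = S :=
  lp.ext_continuousLinearMap (by norm_num) fun A => ContinuousLinearMap.ext_ring (h A)

variable {a adag : ℤ → (Fm →L[ℂ] Fm)}

lemma AnnihilatesOn.mul_self_eq_zero (ha : AnnihilatesOn a) (k : ℤ) : a k * a k = 0 := by
  refine Fm.ext_e fun A => ?_
  rw [mul_apply_eq_comp, ha, zero_apply]
  split_ifs
  · rw [ha, if_neg fun h => A.notMem_erase k h.1]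
  · exact map_zero _

lemma CreatesOn.mul_self_eq_zero (hadag : CreatesOn adag) (k : ℤ) : adag k * adag k = 0 := by
  refine Fm.ext_e fun A => ?_
  rw [mul_apply_eq_comp, hadag, zero_apply]
  split_ifs
  · rw [hadag, if_neg fun h => (h k (A.mem_insert_self k)).false]
  · exact map_zero _

lemma annihilate_create_e (ha : AnnihilatesOn a) (hadag : CreatesOn adag) (k : ℤ)
    (A : Finset ℤ) : a k (adag k (e A)) = if ∀ j ∈ A, k < j then e A else 0 := by
  rw [hadag]
  split_ifs with h
  · have hk : k ∉ A := fun hk => (h k hk).false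
    rw [ha, if_pos, A.erase_insert hk]
    refine ⟨A.mem_insert_self k, fun j hj => ?_⟩
    rcases Finset.mem_insert.mp hj with rfl | hj
    exacts [le_rfl, (h j hj).le]
  · exact map_zero _

lemma create_annihilate_e (ha : AnnihilatesOn a) (hadag : CreatesOn adag) (k : ℤ)
    (A : Finset ℤ) : adag k (a k (e A)) = if k ∈ A ∧ ∀ j ∈ A, k ≤ j then e A else 0 := by
  rw [ha]
  split_ifs with h
  · rw [hadag, if_pos, A.insert_erase h.1]
    intro j hj
    exact (h.2 j (Finset.mem_of_mem_erase hj)).lt_of_ne' (Finset.ne_of_mem_erase hj)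
  · exact map_zero _

lemma create_annihilate_create (ha : AnnihilatesOn a) (hadag : CreatesOn adag) (k : ℤ) :
    adag k * a k * adag k = adag k := by
  refine Fm.ext_e fun A => ?_
  rw [mul_apply_eq_comp, mul_apply_eq_comp, annihilate_create_e ha hadag]
  split_ifs with h
  · rfl
  · rw [map_zero, hadag, if_neg h]

lemma create_annihilate_add_annihilate_create_succ (ha : AnnihilatesOn a)
    (hadag : CreatesOn adag) (i : ℤ) :
    adag (i + 1) * a (i + 1) + a (i + 1) * adag (i + 1) = a i * adag i := by
  refine Fm.ext_e fun A => ?_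
  rw [add_apply, mul_apply_eq_comp, mul_apply_eq_comp, mul_apply_eq_comp,
    create_annihilate_e ha hadag, annihilate_create_e ha hadag, annihilate_create_e ha hadag]
  by_cases hmin : i + 1 ∈ A ∧ ∀ j ∈ A, i + 1 ≤ j
  · rw [if_pos hmin, if_neg fun h => (h _ hmin.1).false,
      if_pos (show ∀ j ∈ A, i < j from hmin.2), add_zero]
  · have hgt : (∀ j ∈ A, i + 1 < j) ↔ ∀ j ∈ A, i < j :=
      ⟨fun h j hj => (lt_add_one i).trans (h j hj), fun h j hj =>
        (h j hj).lt_of_ne fun hj' => hmin ⟨hj' ▸ hj, fun k hk => h k hk⟩⟩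
    rw [if_neg hmin, zero_add, if_congr hgt rfl rfl]

/-- For every `i ∈ ℤ`: `a†_{i+1} a_{i+1} = a_i a_i† − a_{i+1} a†_{i+1}`, and, writing
`s_j := a_j + a_j†`, one has `s_i s_{i+1}² = a_i†`. -/
theorem monotone_selfadjoint_part_identities
    (a adag : ℤ → (Fm →L[ℂ] Fm))
    (ha : AnnihilatesOn a) (hadag : CreatesOn adag) (i : ℤ) :
    adag (i + 1) * a (i + 1) = a i * adag i - a (i + 1) * adag (i + 1) ∧
    (a i + adag i) * (a (i + 1) + adag (i + 1)) ^ 2 = adag i := by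
  have hsplit := create_annihilate_add_annihilate_create_succ ha hadag i
  have hsq : (a (i + 1) + adag (i + 1)) ^ 2 = a i * adag i := by
    rw [sq, add_mul, mul_add, mul_add, ha.mul_self_eq_zero, hadag.mul_self_eq_zero, zero_add,
      add_zero, add_comm, hsplit]
  refine ⟨eq_sub_of_add_eq hsplit, ?_⟩
  rw [hsq, add_mul, ← mul_assoc, ha.mul_self_eq_zero, zero_mul, zero_add, ← mul_assoc,
    create_annihilate_create ha hadag]

end
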